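/- Let the setting be type A_N or type B_N and let (i,k) ∈ X. Any path p ∈ P_{i,k} is uniquely determined by its set of lower corners: if p, p′ ∈ P_{i,k} satisfy C_{p,−} = C_{p′,−}, then p = p′. -/

import Mathlib

namespace Paper

/-- The ambient setting: type `A N` (with `N ≥ 1`) or type `B N ε`
(with `N ≥ 2` and `0 < ε < 1/2`). -/
inductive Setting where
  | A (N : ℕ)
  | B (N : ℕ) (ε : ℝ)

namespace Setting

/-- The rank `N`. -/
def N : Setting → ℕ
  | A n => n
  | B n _ => n

/-- Validity of the parameters of the setting. -/
def valid : Setting → Prop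
  | A n => 1 ≤ n
  | B n ε => 2 ≤ n ∧ 0 < ε ∧ ε < 1 / 2

end Setting

/-- The numbers `r_i` : in type A all equal `1`; in type B, `r_N = 1` and `r_i = 2` for `i < N`. -/
def rr : Setting → ℕ → ℕ
  | .A _, _ => 1
  | .B n _, j => if j = n then 1 else 2

/-- The set `X` in type `A_N`. -/
def XA (n : ℕ) : Set (ℕ × ℤ) :=
  {ik | 1 ≤ ik.1 ∧ ik.1 ≤ n ∧ ((ik.1 : ℤ) - ik.2) % 2 = 1}

/-- The set `X` in type `B_N`. -/
def XB (n : ℕ) : Set (ℕ × ℤ) :=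
  {ik | (ik.1 = n ∧ ik.2 % 2 = 1) ∨ (1 ≤ ik.1 ∧ ik.1 < n ∧ ik.2 % 2 = 0)}

/-- The set `X ⊆ I × ℤ`. -/
def X : Setting → Set (ℕ × ℤ)
  | .A n => XA n
  | .B n _ => XB n

/-- The set `W = {(i,k) : (i, k - r_i) ∈ X}`. -/
def W (S : Setting) : Set (ℕ × ℤ) :=
  {ik | (ik.1, ik.2 - (rr S ik.1 : ℤ)) ∈ X S}

/-- The `r`-th point of a path (a finite list of points of the plane). -/
def pt (p : List (ℝ × ℝ)) (r : ℕ) : ℝ × ℝ := p.getD r (0, 0)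

/-- The set of paths `𝒫_{i,k}` in type `A_N`. -/
def pathsA (n : ℕ) (i : ℕ) (k : ℤ) : Set (List (ℝ × ℝ)) :=
  {p | p.length = n + 2 ∧
    (∀ r, r < n + 2 → (pt p r).1 = (r : ℝ)) ∧
    (pt p 0).2 = (i : ℝ) + (k : ℝ) ∧
    (pt p (n + 1)).2 = (n : ℝ) + 1 - (i : ℝ) + (k : ℝ) ∧
    (∀ r, r ≤ n → (pt p (r + 1)).2 - (pt p r).2 = 1 ∨ (pt p (r + 1)).2 - (pt p r).2 = -1)}

/-- The set of paths `𝒫_{N,ℓ}` in type `B_N`. -/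
def pathsBspin (n : ℕ) (ε : ℝ) (l : ℤ) : Set (List (ℝ × ℝ)) :=
  {p | p.length = n + 1 ∧
    (if l % 4 = 3 then ∀ r, r < n → (pt p r).1 = 2 * (r : ℝ)
     else ∀ r, r < n → (pt p r).1 = 4 * (n : ℝ) - 2 - 2 * (r : ℝ)) ∧
    (pt p n).1 = 2 * (n : ℝ) - 1 ∧
    (pt p 0).2 = (l : ℝ) + 2 * (n : ℝ) - 1 ∧
    (∀ r, r + 2 ≤ n → (pt p (r + 1)).2 - (pt p r).2 = 2 ∨ (pt p (r + 1)).2 - (pt p r).2 = -2) ∧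
    ((pt p n).2 - (pt p (n - 1)).2 = 1 + ε ∨ (pt p n).2 - (pt p (n - 1)).2 = -(1 + ε))}

/-- The set of paths `𝒫_{i,k}` in type `B_N`. -/
def pathsB (n : ℕ) (ε : ℝ) (i : ℕ) (k : ℤ) : Set (List (ℝ × ℝ)) :=
  if i = n then pathsBspin n ε k
  else {p | ∃ a b : List (ℝ × ℝ),
    a ∈ pathsBspin n ε (k - (2 * (n : ℤ) - 2 * (i : ℤ) - 1)) ∧
    b ∈ pathsBspin n ε (k + (2 * (n : ℤ) - 2 * (i : ℤ) - 1)) ∧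
    p = a ++ b.reverse ∧
    (pt a n).1 = (pt b n).1 ∧ 0 < (pt a n).2 - (pt b n).2}

/-- The set of paths `𝒫_{i,k}`. -/
def P : Setting → ℕ → ℤ → Set (List (ℝ × ℝ))
  | .A n => pathsA n
  | .B n ε => pathsB n ε

/-- The map `ι : X → ℤ × ℤ` of type `B_N`. -/
def iotaB (n : ℕ) (ik : ℕ × ℤ) : ℤ × ℤ :=
  if ik.1 = n then (2 * (n : ℤ) - 1, ik.2)
  else if (2 * (n : ℤ) + ik.2 - 2 * (ik.1 : ℤ)) % 4 = 2 then (2 * (ik.1 : ℤ), ik.2)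
  else (4 * (n : ℤ) - 2 - 2 * (ik.1 : ℤ), ik.2)

/-- The corners of a path: `Cp S p true` is the set `C_{p,+}` of upper corners, and
`Cp S p false` is the set `C_{p,-}` of lower corners. -/
def Cp (S : Setting) (p : List (ℝ × ℝ)) (up : Bool) : Set (ℕ × ℤ) :=
  match S with
  | .A n =>
    {jl | 1 ≤ jl.1 ∧ jl.1 ≤ n ∧
      pt p jl.1 = ((jl.1 : ℝ), (jl.2 : ℝ)) ∧
      (pt p (jl.1 - 1)).2 = (jl.2 : ℝ) + (if up then 1 else -1) ∧
      (pt p (jl.1 + 1)).2 = (jl.2 : ℝ) + (if up then 1 else -1)}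
  | .B n ε =>
    {jl | jl ∈ XB n ∧
      ((∃ r : ℕ, 1 ≤ r ∧ r + 1 < p.length ∧
          pt p r = (((iotaB n jl).1 : ℝ), ((iotaB n jl).2 : ℝ)) ∧
          (iotaB n jl).1 ≠ 0 ∧ (iotaB n jl).1 ≠ 2 * (n : ℤ) - 1 ∧
          (iotaB n jl).1 ≠ 4 * (n : ℤ) - 2 ∧
          (if up then (pt p r).2 < (pt p (r - 1)).2 ∧ (pt p r).2 < (pt p (r + 1)).2
           else (pt p (r - 1)).2 < (pt p r).2 ∧ (pt p (r + 1)).2 < (pt p r).2))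
       ∨ (jl.1 = n ∧
          (if up then (2 * (n : ℝ) - 1, (jl.2 : ℝ) - ε) ∈ p ∧ (2 * (n : ℝ) - 1, (jl.2 : ℝ) + ε) ∉ p
           else (2 * (n : ℝ) - 1, (jl.2 : ℝ) + ε) ∈ p ∧ (2 * (n : ℝ) - 1, (jl.2 : ℝ) - ε) ∉ p)))}

/-- `p'` is obtained from `p` by replacing the point `q` by the point `q'`. -/
def Replace1 (p p' : List (ℝ × ℝ)) (q q' : ℝ × ℝ) : Prop :=
  ∃ r : ℕ, r < p.length ∧ pt p r = q ∧ p'.length = p.length ∧ pt p' r = q' ∧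
    ∀ s, s < p.length → s ≠ r → pt p' s = pt p s

/-- `p'` is obtained from `p` by replacing the point `q1` by `q1'` and the point `q2` by `q2'`. -/
def Replace2 (p p' : List (ℝ × ℝ)) (q1 q1' q2 q2' : ℝ × ℝ) : Prop :=
  ∃ r s : ℕ, r < p.length ∧ s < p.length ∧ r ≠ s ∧ pt p r = q1 ∧ pt p s = q2 ∧
    p'.length = p.length ∧ pt p' r = q1' ∧ pt p' s = q2' ∧
    ∀ u, u < p.length → u ≠ r → u ≠ s → pt p' u = pt p u

/-- The path `p` can be lowered at `(j, l)`: `(j, l - r_j) ∈ C_{p,+}` and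
`(j, l + r_j) ∉ C_{p,+}`. -/
def CanLower (S : Setting) (p : List (ℝ × ℝ)) (j : ℕ) (l : ℤ) : Prop :=
  (j, l - (rr S j : ℤ)) ∈ Cp S p true ∧ (j, l + (rr S j : ℤ)) ∉ Cp S p true

/-- `p'` is the result of the lowering move at `(j,l)` applied to the path `p ∈ 𝒫_{i,k}`;
written `p' = p 𝒜_{j,l}⁻¹`. -/
def LoweredTo (S : Setting) (i : ℕ) (k : ℤ) (j : ℕ) (l : ℤ)
    (p p' : List (ℝ × ℝ)) : Prop :=
  p ∈ P S i k ∧ p' ∈ P S i k ∧ CanLower S p j l ∧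
  (match S with
   | .A _ => Replace1 p p' ((j : ℝ), (l : ℝ) - 1) ((j : ℝ), (l : ℝ) + 1)
   | .B n ε =>
     if j = n then
       Replace1 p p' (2 * (n : ℝ) - 1, (l : ℝ) - 1 - ε) (2 * (n : ℝ) - 1, (l : ℝ) + 1 + ε)
     else if j = n - 1 then
       Replace2 p p'
         (((iotaB n (j, l - 2)).1 : ℝ), (l : ℝ) - 2) (((iotaB n (j, l - 2)).1 : ℝ), (l : ℝ) + 2)
         (2 * (n : ℝ) - 1, (l : ℝ) - 1 + ε) (2 * (n : ℝ) - 1, (l : ℝ) + 1 - ε)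
     else
       Replace1 p p'
         (((iotaB n (j, l - 2)).1 : ℝ), (l : ℝ) - 2) (((iotaB n (j, l - 2)).1 : ℝ), (l : ℝ) + 2))

/-- The path `p` can be raised at `(j,l)`: it is of the form `p' 𝒜_{j,l}⁻¹`. -/
def CanRaise (S : Setting) (i : ℕ) (k : ℤ) (p : List (ℝ × ℝ)) (j : ℕ) (l : ℤ) : Prop :=
  ∃ p', LoweredTo S i k j l p' p

/-- The monomial group `ℳ`, realised as exponent functions: the free abelian group on the
symbols `Y_{i,k}`, `(i,k) ∈ X`, is identified with finitely supported functions `(ℕ × ℤ) → ℤ`,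
written additively. -/
def Y (x : ℕ × ℤ) : (ℕ × ℤ) → ℤ := fun z => if z = x then 1 else 0

noncomputable def ind (s : Prop) : ℤ := @ite ℤ s (Classical.propDecidable s) 1 0

/-- The monomial `m(p)` of a path: `∏ Y_{j,l}` over upper corners times `∏ Y_{j,l}⁻¹`
over lower corners. -/
noncomputable def mon (S : Setting) (p : List (ℝ × ℝ)) : (ℕ × ℤ) → ℤ :=
  fun x => ind (x ∈ Cp S p true) - ind (x ∈ Cp S p false)

/-- The monomials `A_{j,l}`, with the conventions `Y_{0,·} = Y_{N+1,·} = 1`. -/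
def Amon (S : Setting) (j : ℕ) (l : ℤ) : (ℕ × ℤ) → ℤ :=
  match S with
  | .A n =>
      Y (j, l + 1) + Y (j, l - 1) - (if j = 1 then 0 else Y (j - 1, l))
        - (if j = n then 0 else Y (j + 1, l))
  | .B n _ =>
      if j = n then Y (n, l + 1) + Y (n, l - 1) - Y (n - 1, l)
      else if j = n - 1 then
        Y (n - 1, l + 2) + Y (n - 1, l - 2) - (if j = 1 then 0 else Y (n - 2, l))
          - Y (n, l + 1) - Y (n, l - 1)
      else
        Y (j, l + 2) + Y (j, l - 2) - (if j = 1 then 0 else Y (j - 1, l)) - Y (j + 1, l)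

/-- A monomial is dominant iff all its exponents are nonnegative. -/
def Dominant (m : (ℕ × ℤ) → ℤ) : Prop := ∀ x, 0 ≤ m x

/-- A monomial is anti-dominant iff all its exponents are nonpositive. -/
def AntiDominant (m : (ℕ × ℤ) → ℤ) : Prop := ∀ x, m x ≤ 0

/-- `(i',k')` is in snake position with respect to `(i,k)`. -/
def SnakePos : Setting → ℕ × ℤ → ℕ × ℤ → Prop
  | .A _, ik, ik' => |(ik'.1 : ℤ) - (ik.1 : ℤ)| + 2 ≤ ik'.2 - ik.2
  | .B n _, ik, ik' =>
      if ik.1 = n ∧ ik'.1 = n then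
        2 ≤ ik'.2 - ik.2 ∧ (ik'.2 - ik.2) % 4 = 2
      else if ik.1 = n ∨ ik'.1 = n then
        2 * |(ik'.1 : ℤ) - (ik.1 : ℤ)| + 3 ≤ ik'.2 - ik.2 ∧
          (ik'.2 - ik.2) % 4 = (2 * |(ik'.1 : ℤ) - (ik.1 : ℤ)| - 1) % 4
      else
        2 * |(ik'.1 : ℤ) - (ik.1 : ℤ)| + 4 ≤ ik'.2 - ik.2 ∧
          (ik'.2 - ik.2) % 4 = (2 * |(ik'.1 : ℤ) - (ik.1 : ℤ)|) % 4

/-- A snake: a sequence of points of `X`, each in snake position w.r.t. the previous one. -/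
def IsSnake (S : Setting) {T : ℕ} (w : Fin T → ℕ × ℤ) : Prop :=
  (∀ t, w t ∈ X S) ∧
  ∀ (t : Fin T) (h : (t : ℕ) + 1 < T), SnakePos S (w t) (w ⟨(t : ℕ) + 1, h⟩)

/-- `p` is strictly above `p'`. -/
def StrictlyAbove (p p' : List (ℝ × ℝ)) : Prop :=
  ∀ a ∈ p, ∀ b ∈ p', a.1 = b.1 → a.2 < b.2

/-- A tuple of paths is non-overlapping. -/
def NonOverlapping {T : ℕ} (ps : Fin T → List (ℝ × ℝ)) : Prop :=
  ∀ s t : Fin T, s < t → StrictlyAbove (ps s) (ps t)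

/-- The set `𝒫̄` of non-overlapping tuples of paths attached to a snake. -/
def PBar (S : Setting) {T : ℕ} (w : Fin T → ℕ × ℤ) : Set (Fin T → List (ℝ × ℝ)) :=
  {ps | (∀ t, ps t ∈ P S (w t).1 (w t).2) ∧ NonOverlapping ps}

/-- The product `∏_t m(p_t)` of the monomials of a tuple of paths. -/
noncomputable def tmon (S : Setting) {T : ℕ} (ps : Fin T → List (ℝ × ℝ)) : (ℕ × ℤ) → ℤ :=
  ∑ t, mon S (ps t)

/-- Lowering move at `jl` on a tuple of paths: one component is lowered, the others
are unchanged. -/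
def TLoweredTo (S : Setting) {T : ℕ} (w : Fin T → ℕ × ℤ) (jl : ℕ × ℤ)
    (ps ps' : Fin T → List (ℝ × ℝ)) : Prop :=
  ∃ t, LoweredTo S (w t).1 (w t).2 jl.1 jl.2 (ps t) (ps' t) ∧ ∀ s, s ≠ t → ps' s = ps s

/-- Sequences of raising/lowering moves on a single path; the list records, for each move,
whether it was a lowering move (`true`) or a raising move (`false`), and its site. -/
inductive MoveSeq (S : Setting) (i : ℕ) (k : ℤ) :
    List (ℝ × ℝ) → List (ℝ × ℝ) → List (Bool × (ℕ × ℤ)) → Prop where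
  | nil (p : List (ℝ × ℝ)) : MoveSeq S i k p p []
  | lower {p q r : List (ℝ × ℝ)} {jl : ℕ × ℤ} {ms : List (Bool × (ℕ × ℤ))} :
      jl ∈ W S → LoweredTo S i k jl.1 jl.2 p q → MoveSeq S i k q r ms →
      MoveSeq S i k p r ((true, jl) :: ms)
  | raise {p q r : List (ℝ × ℝ)} {jl : ℕ × ℤ} {ms : List (Bool × (ℕ × ℤ))} :
      jl ∈ W S → LoweredTo S i k jl.1 jl.2 q p → MoveSeq S i k q r ms →
      MoveSeq S i k p r ((false, jl) :: ms)

/-- Sequences of raising/lowering moves on tuples of paths, all of whose intermediate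
tuples are non-overlapping. -/
inductive TMoveSeq (S : Setting) {T : ℕ} (w : Fin T → ℕ × ℤ) :
    (Fin T → List (ℝ × ℝ)) → (Fin T → List (ℝ × ℝ)) → List (Bool × (ℕ × ℤ)) → Prop where
  | nil (ps : Fin T → List (ℝ × ℝ)) : TMoveSeq S w ps ps []
  | lower {ps qs rs : Fin T → List (ℝ × ℝ)} {jl : ℕ × ℤ} {ms : List (Bool × (ℕ × ℤ))} :
      jl ∈ W S → TLoweredTo S w jl ps qs → NonOverlapping qs →
      TMoveSeq S w qs rs ms → TMoveSeq S w ps rs ((true, jl) :: ms)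
  | raise {ps qs rs : Fin T → List (ℝ × ℝ)} {jl : ℕ × ℤ} {ms : List (Bool × (ℕ × ℤ))} :
      jl ∈ W S → TLoweredTo S w jl qs ps → NonOverlapping qs →
      TMoveSeq S w qs rs ms → TMoveSeq S w ps rs ((false, jl) :: ms)

/-- Sequences of lowering moves on tuples of paths, all of whose intermediate tuples
are non-overlapping; the list records the sites, in order. -/
inductive TLowerSeq (S : Setting) {T : ℕ} (w : Fin T → ℕ × ℤ) :
    (Fin T → List (ℝ × ℝ)) → (Fin T → List (ℝ × ℝ)) → List (ℕ × ℤ) → Prop where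
  | nil (ps : Fin T → List (ℝ × ℝ)) : TLowerSeq S w ps ps []
  | cons {ps qs rs : Fin T → List (ℝ × ℝ)} {jl : ℕ × ℤ} {ms : List (ℕ × ℤ)} :
      jl ∈ W S → TLoweredTo S w jl ps qs → NonOverlapping qs →
      TLowerSeq S w qs rs ms → TLowerSeq S w ps rs (jl :: ms)

/-- Weak order on paths with the same x-coordinates: `p` is weakly above `p'`. -/
def WeaklyAbove (p p' : List (ℝ × ℝ)) : Prop :=
  p.length = p'.length ∧ ∀ r, r < p.length → (pt p r).2 ≤ (pt p' r).2

/-- `p` is weakly below `p'`. -/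
def WeaklyBelow (p p' : List (ℝ × ℝ)) : Prop :=
  p.length = p'.length ∧ ∀ r, r < p.length → (pt p' r).2 ≤ (pt p r).2

/-- The path `top(p, p')`. -/
def topPath (p p' : List (ℝ × ℝ)) : List (ℝ × ℝ) :=
  List.zipWith (fun a b => (a.1, min a.2 b.2)) p p'

/-- The distinguished point contained in the highest path `p⁺_{i,k}`. -/
def highPoint : Setting → ℕ → ℤ → ℝ × ℝ
  | .A _, i, k => ((i : ℝ), (k : ℝ))
  | .B n ε, i, k =>
      if i = n then (2 * (n : ℝ) - 1, (k : ℝ) - ε)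
      else (((iotaB n (i, k)).1 : ℝ), ((iotaB n (i, k)).2 : ℝ))

/-- The distinguished point contained in the lowest path `p⁻_{i,k}`. -/
def lowPoint : Setting → ℕ → ℤ → ℝ × ℝ
  | .A n, i, k => ((n : ℝ) + 1 - (i : ℝ), (k : ℝ) + (n : ℝ) + 1)
  | .B n ε, i, k =>
      if i = n then (2 * (n : ℝ) - 1, (k : ℝ) + 4 * (n : ℝ) - 2 + ε)
      else (((iotaB n (i, k + 4 * (n : ℤ) - 2)).1 : ℝ),
            ((iotaB n (i, k + 4 * (n : ℤ) - 2)).2 : ℝ))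

/-- The highest path `p⁺_{i,k}` : the path of `𝒫_{i,k}` with no lower corners. -/
noncomputable def highestPath (S : Setting) (i : ℕ) (k : ℤ) : List (ℝ × ℝ) :=
  Classical.epsilon fun p => p ∈ P S i k ∧ Cp S p false = ∅

/-- The lowest path `p⁻_{i,k}` : the path of `𝒫_{i,k}` with no upper corners. -/
noncomputable def lowestPath (S : Setting) (i : ℕ) (k : ℤ) : List (ℝ × ℝ) :=
  Classical.epsilon fun p => p ∈ P S i k ∧ Cp S p true = ∅

/-!
Take two paths with the same lower corners and the first point where their `y`-coordinates
differ, say the first path is ahead (larger `y`) there; a lower corner is a local maximum of `y`.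
From then on the first path keeps its lead at least until it reaches a peak, since the other
path rises no faster; but a peak is a lower corner, which the other path shares, so the lead
would vanish there. In type A the paths meet again at their common endpoint, so such a peak
exists.

In type B a spin path ends with a step of `±(1 + ε)` into the middle column `x = 2N - 1`, where
the corners `(N, ℓ)` only see the set of `y`-values in that column. If the first path has no peak
before that column, its last step goes up and creates a corner `(N, ℓ)` that the second path
lacks. For `i < N` the right half can hide that corner only by descending onto `ℓ - ε`; it is
then ahead of the other right half next to the middle column, and the argument runs from the
other end instead. Once the left halves agree, the same reasoning settles the right halves.
-/

section Profiles

variable {f g : ℕ → ℝ}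

theorem eqOn_of_not_first_lt {N : ℕ}
    (hfg : ∀ r < N, (∀ t < r, f t = g t) → g r < f r → False)
    (hgf : ∀ r < N, (∀ t < r, g t = f t) → f r < g r → False) :
    ∀ t < N, f t = g t := by
  intro t
  induction t using Nat.strong_induction_on with
  | _ t ih =>
    intro ht
    have hbefore : ∀ s < t, f s = g s := fun s hs => ih s hs (hs.trans ht)
    by_contra hne
    rcases lt_or_gt_of_ne hne with hlt | hlt
    · exact hgf t ht (fun s hs => (hbefore s hs).symm) hlt
    · exact hfg t ht hbefore hlt

theorem exists_eq_add_mul_of_steps {c : ℝ} {m : ℕ}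
    (hf : ∀ t < m, f (t + 1) - f t = c ∨ f (t + 1) - f t = -c) :
    ∀ t ≤ m, ∃ j : ℤ, f t = f 0 + c * (t + 2 * j) := by
  intro t
  induction t with
  | zero => exact fun _ => ⟨0, by simp⟩
  | succ t ih =>
    intro ht
    obtain ⟨j, hj⟩ := ih (by omega)
    rcases hf t (by omega) with hstep | hstep
    · exact ⟨j, by push_cast; linarith⟩
    · exact ⟨j - 1, by push_cast; linarith⟩

theorem exists_peak_of_rise {c : ℝ} {r m : ℕ} (hc : 0 < c) (hrm : r ≤ m)
    (hf : ∀ t, r ≤ t → t < m → f (t + 1) - f t = c ∨ f (t + 1) - f t = -c)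
    (hg : ∀ t, r ≤ t → t < m → g (t + 1) - g t ≤ c)
    (hup : f (r - 1) < f r) :
    ∃ s, r ≤ s ∧ s ≤ m ∧ f r - g r ≤ f s - g s ∧ f (s - 1) < f s ∧
      (s < m → f (s + 1) < f s) := by
  obtain ⟨d, rfl⟩ := Nat.exists_eq_add_of_le hrm
  clear hrm
  induction d generalizing r with
  | zero => exact ⟨r, le_rfl, le_rfl, le_rfl, hup, fun h => by omega⟩
  | succ d ih =>
    rcases hf r le_rfl (by omega) with hstep | hstep
    · have hgr := hg r le_rfl (by omega)
      obtain ⟨s, hrs, hsm, hgap, hleft, hright⟩ := ih (r := r + 1)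
        (by rw [Nat.add_sub_cancel]; linarith)
        (fun t h₁ h₂ => hf t (by omega) (by omega)) (fun t h₁ h₂ => hg t (by omega) (by omega))
      exact ⟨s, by omega, by omega, by linarith, hleft, fun h => hright (by omega)⟩
    · exact ⟨r, le_rfl, by omega, le_rfl, hup, fun _ => by linarith⟩

end Profiles

section Lists

theorem pt_eq_getElem (p : List (ℝ × ℝ)) {r : ℕ} (h : r < p.length) : pt p r = p[r] := by
  simp [pt, List.getD_eq_getElem?_getD, List.getElem?_eq_getElem h]

theorem mem_iff_exists_pt {p : List (ℝ × ℝ)} {x : ℝ × ℝ} :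
    x ∈ p ↔ ∃ r < p.length, pt p r = x := by
  rw [List.mem_iff_getElem]
  constructor
  · rintro ⟨r, h, rfl⟩
    exact ⟨r, h, pt_eq_getElem p h⟩
  · rintro ⟨r, h, rfl⟩
    exact ⟨r, h, (pt_eq_getElem p h).symm⟩

theorem eq_of_pt_eq {p q : List (ℝ × ℝ)} (hl : p.length = q.length)
    (hfst : ∀ r < p.length, (pt p r).1 = (pt q r).1)
    (hsnd : ∀ r < p.length, (pt p r).2 = (pt q r).2) : p = q := by
  refine List.ext_getElem hl fun r h₁ h₂ => ?_
  rw [← pt_eq_getElem p h₁, ← pt_eq_getElem q h₂]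
  exact Prod.ext (hfst r h₁) (hsnd r h₁)

theorem pt_append_of_lt {a b : List (ℝ × ℝ)} {r : ℕ} (h : r < a.length) :
    pt (a ++ b) r = pt a r := by
  rw [pt_eq_getElem a h, pt_eq_getElem _ (by simp; omega), List.getElem_append_left h]

theorem pt_append_reverse {n : ℕ} {a b : List (ℝ × ℝ)} (ha : a.length = n + 1)
    (hb : b.length = n + 1) {t : ℕ} (ht : t ≤ n) :
    pt (a ++ b.reverse) (2 * n + 1 - t) = pt b t := by
  rw [pt_eq_getElem b (by omega), pt_eq_getElem _ (by simp; omega),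
    List.getElem_append_right (by omega), List.getElem_reverse]
  congr 1
  omega

end Lists

section TypeA

variable {n i : ℕ} {k : ℤ} {p p' : List (ℝ × ℝ)}

theorem pathsA.snd_eq_of_peak (hp : p ∈ pathsA n i k)
    (h : Cp (.A n) p false = Cp (.A n) p' false) {t : ℕ} (ht : 1 ≤ t) (htn : t ≤ n)
    (hleft : (pt p (t - 1)).2 < (pt p t).2) (hright : (pt p (t + 1)).2 < (pt p t).2) :
    (pt p' t).2 = (pt p t).2 := by
  obtain ⟨-, hx, h0, -, hstep⟩ := hp
  obtain ⟨j, hj⟩ := exists_eq_add_mul_of_steps (f := fun t => (pt p t).2) (m := n + 1)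
    (fun t ht => hstep t (by omega)) t (by omega)
  have hdown := hstep t htn
  have hup := hstep (t - 1) (by omega)
  rw [Nat.sub_add_cancel ht] at hup
  have hcorner : (t, (i + k + t + 2 * j : ℤ)) ∈ Cp (.A n) p false := by
    simp only [Cp, Bool.false_eq_true, if_false, Set.mem_ofPred_eq]
    refine ⟨ht, htn, Prod.ext (hx t (by omega)) ?_, ?_, ?_⟩ <;>
      · push_cast
        rcases hup with hup | hup <;> rcases hdown with hdown | hdown <;> linarith
  rw [h] at hcorner
  rw [congrArg Prod.snd hcorner.2.2.1]
  push_cast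
  linarith

theorem pathsA.false_of_first_lt (hp : p ∈ pathsA n i k) (hp' : p' ∈ pathsA n i k)
    (h : Cp (.A n) p false = Cp (.A n) p' false) {r : ℕ} (hr : r < n + 2)
    (hbefore : ∀ t < r, (pt p t).2 = (pt p' t).2) (hlt : (pt p' r).2 < (pt p r).2) :
    False := by
  obtain ⟨-, -, h0, hend, hstep⟩ := id hp
  obtain ⟨-, -, h0', hend', hstep'⟩ := hp'
  have hr0 : r ≠ 0 := by rintro rfl; linarith
  have hrn : r ≠ n + 1 := by rintro rfl; linarith
  have hprev := hbefore (r - 1) (by omega)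
  have hf := hstep (r - 1) (by omega)
  have hg := hstep' (r - 1) (by omega)
  rw [Nat.sub_add_cancel (by omega)] at hf hg
  have hrise : (pt p (r - 1)).2 < (pt p r).2 := by
    rcases hf with hf | hf <;> rcases hg with hg | hg <;> linarith
  obtain ⟨s, hrs, hsm, hgap, hleft, hright⟩ :=
    exists_peak_of_rise (f := fun t => (pt p t).2) (g := fun t => (pt p' t).2) (r := r)
      (m := n + 1) one_pos (by omega) (fun t _ ht => hstep t (by omega))
      (fun t _ ht => by rcases hstep' t (by omega) with h | h <;> linarith) hrise
  have hsn : s ≠ n + 1 := by rintro rfl; linarith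
  have := pathsA.snd_eq_of_peak hp h (by omega) (by omega) hleft
    (hright (by omega))
  linarith

theorem pathsA.eq_of_lowerCorners (hp : p ∈ pathsA n i k) (hp' : p' ∈ pathsA n i k)
    (h : Cp (.A n) p false = Cp (.A n) p' false) : p = p' := by
  refine eq_of_pt_eq (by rw [hp.1, hp'.1]) (fun r hr => ?_) (fun r hr => ?_)
  · rw [hp.2.1 r (by rw [← hp.1]; exact hr), hp'.2.1 r (by rw [← hp.1]; exact hr)]
  · refine eqOn_of_not_first_lt (f := fun t => (pt p t).2) (g := fun t => (pt p' t).2)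
      (fun r hr hb hlt => pathsA.false_of_first_lt hp hp' h hr hb hlt)
      (fun r hr hb hlt => pathsA.false_of_first_lt hp' hp h.symm hr hb hlt) r ?_
    rw [← hp.1]; exact hr

end TypeA

section SpinProfile

variable {n : ℕ} {ε : ℝ} {F G : ℕ → ℝ}

def IsSpinProfile (n : ℕ) (ε : ℝ) (F : ℕ → ℝ) : Prop :=
  (∃ z : ℤ, F 0 = 2 * z) ∧
    (∀ t, t + 2 ≤ n → F (t + 1) - F t = 2 ∨ F (t + 1) - F t = -2) ∧
    (F n - F (n - 1) = 1 + ε ∨ F n - F (n - 1) = -(1 + ε))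

theorem IsSpinProfile.exists_even (hF : IsSpinProfile n ε F) : ∃ z : ℤ, F (n - 1) = 2 * z := by
  obtain ⟨⟨z₀, hz₀⟩, hsteps, -⟩ := hF
  obtain ⟨j, hj⟩ := exists_eq_add_mul_of_steps (f := F) (m := n - 1)
    (fun t ht => hsteps t (by omega)) (n - 1) le_rfl
  exact ⟨z₀ + (n - 1 : ℕ) + 2 * j, by push_cast; linarith⟩

theorem IsSpinProfile.lastStep_up_of_first_lt (hε : 0 < ε) (hF : IsSpinProfile n ε F)
    (hG : IsSpinProfile n ε G) (h0 : F 0 = G 0)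
    (hpeak : ∀ t, 1 ≤ t → t < n → F (t - 1) < F t → F (t + 1) < F t → G t = F t)
    {r : ℕ} (hrn : r ≤ n) (hbefore : ∀ t < r, F t = G t) (hlt : G r < F r) :
    F n - F (n - 1) = 1 + ε ∧ G n + 2 ≤ F n := by
  obtain ⟨-, hFs, hFn⟩ := hF
  obtain ⟨-, hGs, hGn⟩ := hG
  have hr0 : r ≠ 0 := by rintro rfl; linarith
  have hprev := hbefore (r - 1) (by omega)
  rcases eq_or_lt_of_le hrn with rfl | hrn
  · rcases hFn with hFn | hFn <;> rcases hGn with hGn | hGn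
    · linarith
    · exact ⟨hFn, by linarith⟩
    all_goals linarith
  have hf := hFs (r - 1) (by omega)
  have hg := hGs (r - 1) (by omega)
  rw [Nat.sub_add_cancel (by omega)] at hf hg
  have hrise : F (r - 1) < F r ∧ F r - G r = 4 := by
    rcases hf with hf | hf <;> rcases hg with hg | hg <;> constructor <;> linarith
  obtain ⟨s, hrs, hsn, hgap, hleft, hright⟩ :=
    exists_peak_of_rise (f := F) (g := G) (r := r) (m := n - 1) two_pos (by omega)
      (fun t _ ht => hFs t (by omega))
      (fun t _ ht => by rcases hGs t (by omega) with h | h <;> linarith)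
      hrise.1
  have hs : s = n - 1 := by
    by_contra hs
    have := hpeak s (by omega) (by omega) hleft (hright (by omega))
    linarith
  subst hs
  rcases hFn with hFn | hFn
  · exact ⟨hFn, by rcases hGn with hGn | hGn <;> linarith⟩
  · have := hpeak (n - 1) (by omega) (by omega) hleft
      (by rw [Nat.sub_add_cancel (by omega)]; linarith)
    linarith

theorem IsSpinProfile.false_of_lt_of_lastStep_down (hF : IsSpinProfile n ε F)
    (hG : IsSpinProfile n ε G) (h0 : F 0 = G 0)
    (hpeak : ∀ t, 1 ≤ t → t < n → F (t - 1) < F t → F (t + 1) < F t → G t = F t)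
    (hlt : G (n - 1) < F (n - 1)) (hdown : F n < F (n - 1)) : False := by
  obtain ⟨-, hFs, -⟩ := hF
  obtain ⟨-, hGs, -⟩ := hG
  have hn : n ≠ 0 := by rintro rfl; simp only [Nat.zero_sub] at hlt; linarith
  have hrev : ∀ t, 1 ≤ t → t < n → ∀ H : ℕ → ℝ,
      (∀ t, t + 2 ≤ n → H (t + 1) - H t = 2 ∨ H (t + 1) - H t = -2) →
      H (n - (t + 1)) - H (n - t) = 2 ∨ H (n - (t + 1)) - H (n - t) = -2 := by
    intro t ht₁ ht₂ H hH
    have := hH (n - (t + 1)) (by omega)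
    rw [show n - (t + 1) + 1 = n - t by omega] at this
    rcases this with h | h
    · exact Or.inr (by linarith)
    · exact Or.inl (by linarith)
  obtain ⟨s, hs1, hsn, hgap, hleft, hright⟩ :=
    exists_peak_of_rise (f := fun t => F (n - t)) (g := fun t => G (n - t)) (r := 1) (m := n)
      two_pos (by omega) (fun t ht₁ ht₂ => hrev t ht₁ ht₂ F hFs)
      (fun t ht₁ ht₂ => by rcases hrev t ht₁ ht₂ G hGs with h | h <;> linarith)
      (by simpa using hdown)
  rcases eq_or_lt_of_le hsn with rfl | hsn
  · simp only [Nat.sub_self] at hgap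
    linarith
  · have := hpeak (n - s) (by omega) (by omega)
      (by rw [show n - s - 1 = n - (s + 1) by omega]; exact hright hsn)
      (by rw [show n - s + 1 = n - (s - 1) by omega]; exact hleft)
    linarith

/-- Transfer of the lower corners `(N, ℓ)` between two paths whose middle columns `x = 2N - 1`
hold the heights `α, β` and `α', β'`. -/
def MidCornersTransfer (ε α β α' β' : ℝ) : Prop :=
  ∀ ℓ : ℤ, ℓ % 2 = 1 → (ℓ + ε = α ∨ ℓ + ε = β) → ℓ - ε ≠ α → ℓ - ε ≠ β →
    ℓ + ε = α' ∨ ℓ + ε = β'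

variable {Fa Fb Ga Gb : ℕ → ℝ}

theorem false_of_left_lastStep_up (hε : 0 < ε) (hε1 : ε < 1) (hFa : IsSpinProfile n ε Fa)
    (hFb : IsSpinProfile n ε Fb) (hGb : IsSpinProfile n ε Gb) (hb0 : Fb 0 = Gb 0)
    (hpeakb : ∀ t, 1 ≤ t → t < n → Fb (t - 1) < Fb t → Fb (t + 1) < Fb t → Gb t = Fb t)
    (hGab : Gb n < Ga n) (hmid : MidCornersTransfer ε (Fa n) (Fb n) (Ga n) (Gb n))
    (hup : Fa n - Fa (n - 1) = 1 + ε) (hlow : Ga n + 2 ≤ Fa n) : False := by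
  obtain ⟨A, hA⟩ := hFa.exists_even
  obtain ⟨B, hB⟩ := hFb.exists_even
  by_cases hcancel : Fb n = 2 * A + 1 - ε
  · -- Only a descent of `Fb` from `2A + 2` hides the corner `(N, 2A + 1)`; then `Fb` is
    -- above `Gb` next to the middle column.
    rcases hFb.2.2 with hFbn | hFbn
    · have hBA : ((B - A : ℤ) : ℝ) = -ε := by push_cast; linarith
      have hneg : B - A < 0 := by exact_mod_cast (show ((B - A : ℤ) : ℝ) < 0 by linarith)
      have : ((B - A : ℤ) : ℝ) ≤ -1 := by exact_mod_cast (by omega : B - A ≤ -1)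
      linarith
    · refine hFb.false_of_lt_of_lastStep_down hGb hb0 hpeakb ?_ (by linarith)
      rcases hGb.2.2 with h | h <;> linarith
  · rcases hmid (2 * A + 1) (by omega) (Or.inl (by push_cast; linarith))
      (by push_cast; linarith) (by push_cast; exact fun h => hcancel (by linarith)) with h | h <;>
      push_cast at h <;> linarith

theorem false_of_right_lastStep_up (hε : 0 < ε) (hFb : IsSpinProfile n ε Fb)
    (hFab : Fb n < Fa n) (hmid : MidCornersTransfer ε (Fa n) (Fb n) (Ga n) (Gb n))
    (hsame : Ga n = Fa n) (hup : Fb n - Fb (n - 1) = 1 + ε) (hlow : Gb n < Fb n) : False := by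
  obtain ⟨B, hB⟩ := hFb.exists_even
  rcases hmid (2 * B + 1) (by omega) (Or.inr (by push_cast; linarith))
    (by push_cast; linarith) (by push_cast; linarith) with h | h <;>
    push_cast at h <;> linarith

end SpinProfile

section SpinPaths

variable {n : ℕ} {ε : ℝ}

def spinX (n : ℕ) (l : ℤ) (t : ℕ) : ℤ :=
  if t = n then 2 * n - 1 else if l % 4 = 3 then 2 * t else 4 * n - 2 - 2 * t

def pathX (n i : ℕ) (k : ℤ) (r : ℕ) : ℤ :=
  if i = n then spinX n k r
  else if r ≤ n then spinX n (k - (2 * n - 2 * i - 1)) r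
  else spinX n (k + (2 * n - 2 * i - 1)) (2 * n + 1 - r)

-- The conditions on `jl` in the first clause of `Cp (.B n ε)`.
def IsInteriorLabel (n : ℕ) (x : ℝ × ℝ) (jl : ℕ × ℤ) : Prop :=
  jl ∈ XB n ∧ jl.1 ≠ n ∧ x = (((iotaB n jl).1 : ℝ), ((iotaB n jl).2 : ℝ)) ∧
    (iotaB n jl).1 ≠ 0 ∧ (iotaB n jl).1 ≠ 2 * n - 1 ∧ (iotaB n jl).1 ≠ 4 * n - 2

theorem mem_lowerCorners_of_peak {p : List (ℝ × ℝ)} {r : ℕ} {jl : ℕ × ℤ}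
    (hjl : IsInteriorLabel n (pt p r) jl) (hr1 : 1 ≤ r) (hr : r + 1 < p.length)
    (hleft : (pt p (r - 1)).2 < (pt p r).2) (hright : (pt p (r + 1)).2 < (pt p r).2) :
    jl ∈ Cp (.B n ε) p false := by
  obtain ⟨hX, -, hpt, h0, hmid, hend⟩ := hjl
  exact ⟨hX, Or.inl ⟨r, hr1, hr, hpt, h0, hmid, hend, hleft, hright⟩⟩

theorem exists_pt_of_mem_lowerCorners {p : List (ℝ × ℝ)} {jl : ℕ × ℤ}
    (hjl : jl ∈ Cp (.B n ε) p false) (hj : jl.1 ≠ n) :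
    ∃ r < p.length, pt p r = (((iotaB n jl).1 : ℝ), ((iotaB n jl).2 : ℝ)) := by
  rcases hjl.2 with ⟨r, -, hr, hpt, -⟩ | ⟨hn, -⟩
  · exact ⟨r, by omega, hpt⟩
  · exact absurd hn hj

theorem mid_mem_lowerCorners_iff {p : List (ℝ × ℝ)} {ℓ : ℤ} :
    (n, ℓ) ∈ Cp (.B n ε) p false ↔
      ℓ % 2 = 1 ∧ (2 * (n : ℝ) - 1, ℓ + ε) ∈ p ∧ (2 * (n : ℝ) - 1, ℓ - ε) ∉ p := by
  constructor
  · rintro ⟨hX, ⟨r, -, -, -, -, hmid, -⟩ | ⟨-, hin, hout⟩⟩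
    · simp [iotaB] at hmid
    · exact ⟨by simpa [XB] using hX, hin, hout⟩
  · rintro ⟨hℓ, hin, hout⟩
    exact ⟨Or.inl ⟨rfl, hℓ⟩, Or.inr ⟨rfl, hin, hout⟩⟩

variable {l : ℤ} {q : List (ℝ × ℝ)}

theorem pathsBspin.fst_eq (hq : q ∈ pathsBspin n ε l) {t : ℕ} (ht : t ≤ n) :
    (pt q t).1 = spinX n l t := by
  obtain ⟨-, hx, hxn, -⟩ := hq
  unfold spinX
  by_cases htn : t = n
  · subst htn
    rw [if_pos rfl, hxn]
    push_cast
    ring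
  · rw [if_neg htn]
    split_ifs at hx ⊢ <;> rw [hx t (by omega)] <;> push_cast <;> ring

theorem pathsBspin.isSpinProfile (hq : q ∈ pathsBspin n ε l) (hl : l % 2 = 1) :
    IsSpinProfile n ε fun t => (pt q t).2 := by
  obtain ⟨m, rfl⟩ : ∃ m, l = 2 * m + 1 := ⟨l / 2, by omega⟩
  exact ⟨⟨m + n, by show (pt q 0).2 = _; rw [hq.2.2.2.1]; push_cast; ring⟩, hq.2.2.2.2⟩

theorem pathsBspin.mem_mid_iff (hq : q ∈ pathsBspin n ε l) {y : ℝ} :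
    (2 * (n : ℝ) - 1, y) ∈ q ↔ y = (pt q n).2 := by
  have hmid : ∀ t ≤ n, (pt q t).1 = 2 * (n : ℝ) - 1 → t = n := by
    intro t ht hx
    rw [pathsBspin.fst_eq hq ht] at hx
    have : spinX n l t = 2 * n - 1 := by exact_mod_cast hx
    unfold spinX at this
    split_ifs at this <;> omega
  rw [mem_iff_exists_pt, hq.1]
  constructor
  · rintro ⟨t, ht, hpt⟩
    obtain rfl := hmid t (by omega) (congrArg Prod.fst hpt)
    rw [hpt]
  · rintro rfl
    refine ⟨n, by omega, Prod.ext ?_ rfl⟩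
    rw [pathsBspin.fst_eq hq le_rfl]
    simp [spinX]

theorem pathsBspin.exists_label (hq : q ∈ pathsBspin n ε l) (hl : l % 2 = 1) {t : ℕ}
    (ht : 1 ≤ t) (htn : t < n) : ∃ jl, IsInteriorLabel n (pt q t) jl := by
  obtain ⟨j, hj⟩ := exists_eq_add_mul_of_steps (f := fun t => (pt q t).2) (m := n - 1)
    (fun t ht => hq.2.2.2.2.1 t (by omega)) t (by omega)
  set z : ℤ := l + 2 * n - 1 + 2 * t + 4 * j with hz
  have hι : iotaB n (t, z) = (spinX n l t, z) := by
    unfold iotaB spinX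
    split_ifs <;> simp only [Prod.mk.injEq] <;> omega
  refine ⟨(t, z), Or.inr ⟨ht, htn, by omega⟩, by simp only; omega, ?_⟩
  rw [hι]
  refine ⟨Prod.ext (pathsBspin.fst_eq hq htn.le) ?_, ?_⟩
  · simp only at hj ⊢
    rw [hj, hq.2.2.2.1, hz]
    push_cast
    ring
  · unfold spinX
    split_ifs <;> omega

end SpinPaths

section PathsB

variable {n i : ℕ} {ε : ℝ} {k : ℤ} {p p' a b a' b' : List (ℝ × ℝ)}

theorem mem_mid_append_iff {la lb : ℤ} (ha : a ∈ pathsBspin n ε la)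
    (hb : b ∈ pathsBspin n ε lb) {y : ℝ} :
    (2 * (n : ℝ) - 1, y) ∈ a ++ b.reverse ↔ y = (pt a n).2 ∨ y = (pt b n).2 := by
  rw [List.mem_append, List.mem_reverse, pathsBspin.mem_mid_iff ha, pathsBspin.mem_mid_iff hb]

def Halves (n : ℕ) (ε : ℝ) (i : ℕ) (k : ℤ) (a b : List (ℝ × ℝ)) : Prop :=
  a ∈ pathsBspin n ε (k - (2 * n - 2 * i - 1)) ∧ b ∈ pathsBspin n ε (k + (2 * n - 2 * i - 1)) ∧
    (pt b n).2 < (pt a n).2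

theorem exists_halves (hi : i ≠ n) (hp : p ∈ pathsB n ε i k) :
    ∃ a b, Halves n ε i k a b ∧ p = a ++ b.reverse := by
  rw [pathsB, if_neg hi] at hp
  obtain ⟨a, b, ha, hb, rfl, -, hgap⟩ := hp
  exact ⟨a, b, ⟨ha, hb, by linarith⟩, rfl⟩

theorem Halves.append_mem (hi : i ≠ n) (hab : Halves n ε i k a b) :
    a ++ b.reverse ∈ pathsB n ε i k := by
  obtain ⟨ha, hb, hgap⟩ := hab
  rw [pathsB, if_neg hi]
  exact ⟨a, b, ha, hb, rfl, by rw [ha.2.2.1, hb.2.2.1], by linarith⟩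

theorem pathsB.length_eq (hp : p ∈ pathsB n ε i k) :
    p.length = if i = n then n + 1 else 2 * n + 2 := by
  unfold pathsB at hp
  split_ifs at hp ⊢
  · exact hp.1
  · obtain ⟨a, b, ha, hb, rfl, -⟩ := hp
    simp only [List.length_append, List.length_reverse, ha.1, hb.1]
    ring

theorem pathsB.fst_eq (hp : p ∈ pathsB n ε i k) {r : ℕ} (hr : r < p.length) :
    (pt p r).1 = pathX n i k r := by
  have hlen := pathsB.length_eq hp
  unfold pathsB at hp
  unfold pathX
  split_ifs at hp hlen ⊢ with hi hrn
  · exact pathsBspin.fst_eq hp (by omega)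
  · obtain ⟨a, b, ha, hb, rfl, -⟩ := hp
    rw [pt_append_of_lt (by rw [ha.1]; omega)]
    exact pathsBspin.fst_eq ha hrn
  · obtain ⟨a, b, ha, hb, rfl, -⟩ := hp
    have := pt_append_reverse ha.1 hb.1 (t := 2 * n + 1 - r) (by omega)
    rw [show 2 * n + 1 - (2 * n + 1 - r) = r by omega] at this
    rw [this]
    exact pathsBspin.fst_eq hb (by omega)

theorem pathX_injOn (hik : (i, k) ∈ XB n) {r r' : ℕ}
    (hr : r < if i = n then n + 1 else 2 * n + 2) (hr' : r' < if i = n then n + 1 else 2 * n + 2)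
    (he : pathX n i k r = pathX n i k r') (hmid : pathX n i k r ≠ 2 * n - 1) : r = r' := by
  simp only [XB, Set.mem_ofPred_eq] at hik
  unfold pathX spinX at he hmid
  split_ifs at hr hr' he hmid <;> omega

theorem pathsB.exists_label (hik : (i, k) ∈ XB n) (hp : p ∈ pathsB n ε i k) {r : ℕ}
    (hr1 : 1 ≤ r) (hr : r + 1 < p.length) (hmid : pathX n i k r ≠ 2 * n - 1) :
    ∃ jl, IsInteriorLabel n (pt p r) jl := by
  simp only [XB, Set.mem_ofPred_eq] at hik
  have hlen := pathsB.length_eq hp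
  unfold pathsB at hp
  unfold pathX at hmid
  split_ifs at hp hlen hmid with hi hrn
  · exact pathsBspin.exists_label hp (by omega) hr1 (by omega)
  · obtain ⟨a, b, ha, hb, rfl, -⟩ := hp
    have hrn' : r ≠ n := by rintro rfl; simp [spinX] at hmid
    rw [pt_append_of_lt (by rw [ha.1]; omega)]
    exact pathsBspin.exists_label ha (by omega) hr1 (by omega)
  · obtain ⟨a, b, ha, hb, rfl, -⟩ := hp
    have hrn' : 2 * n + 1 - r ≠ n := by intro h; simp [spinX, h] at hmid
    have := pt_append_reverse ha.1 hb.1 (t := 2 * n + 1 - r) (by omega)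
    rw [show 2 * n + 1 - (2 * n + 1 - r) = r by omega] at this
    rw [this]
    exact pathsBspin.exists_label hb (by omega) (by omega) (by omega)

theorem pathsB.snd_eq_of_peak (hik : (i, k) ∈ XB n) (hp : p ∈ pathsB n ε i k)
    (hp' : p' ∈ pathsB n ε i k) (h : Cp (.B n ε) p false = Cp (.B n ε) p' false) {r : ℕ}
    (hr1 : 1 ≤ r) (hr : r + 1 < p.length) (hmid : pathX n i k r ≠ 2 * n - 1)
    (hleft : (pt p (r - 1)).2 < (pt p r).2) (hright : (pt p (r + 1)).2 < (pt p r).2) :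
    (pt p' r).2 = (pt p r).2 := by
  obtain ⟨jl, hjl⟩ := pathsB.exists_label hik hp hr1 hr hmid
  have hcorner := mem_lowerCorners_of_peak (ε := ε) hjl hr1 hr hleft hright
  rw [h] at hcorner
  obtain ⟨r', hr', hpt'⟩ := exists_pt_of_mem_lowerCorners hcorner hjl.2.1
  have hpt : pt p' r' = pt p r := hpt'.trans hjl.2.2.1.symm
  have hlen := pathsB.length_eq hp
  have hlen' := pathsB.length_eq hp'
  have hx : pathX n i k r = pathX n i k r' := by
    have := congrArg Prod.fst hpt
    rw [pathsB.fst_eq hp' hr', pathsB.fst_eq hp (by omega)] at this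
    exact_mod_cast this.symm
  obtain rfl := pathX_injOn hik (by omega) (by omega) hx hmid
  rw [hpt]

theorem pathsB.false_of_first_lt_spin (hε : 0 < ε) (hik : (n, k) ∈ XB n)
    (hp : p ∈ pathsB n ε n k) (hp' : p' ∈ pathsB n ε n k)
    (h : Cp (.B n ε) p false = Cp (.B n ε) p' false) {r : ℕ} (hr : r < n + 1)
    (hbefore : ∀ t < r, (pt p t).2 = (pt p' t).2) (hlt : (pt p' r).2 < (pt p r).2) : False := by
  have hk : k % 2 = 1 := by simp only [XB, Set.mem_ofPred_eq] at hik; omega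
  have hq : p ∈ pathsBspin n ε k := by simpa [pathsB] using hp
  have hq' : p' ∈ pathsBspin n ε k := by simpa [pathsB] using hp'
  have hprof := pathsBspin.isSpinProfile hq hk
  obtain ⟨hup, hlow⟩ := hprof.lastStep_up_of_first_lt hε (pathsBspin.isSpinProfile hq' hk)
    (hq.2.2.2.1.trans hq'.2.2.2.1.symm)
    (fun t ht htn hleft hright => pathsB.snd_eq_of_peak hik hp hp' h ht (by rw [hq.1]; omega)
      (by simp [pathX, spinX]; omega) hleft hright)
    (by omega) hbefore hlt
  obtain ⟨A, hA⟩ := hprof.exists_even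
  have hcorner : (n, 2 * A + 1) ∈ Cp (.B n ε) p false := by
    refine mid_mem_lowerCorners_iff.2 ⟨by omega, (pathsBspin.mem_mid_iff hq).2 ?_, fun hmem => ?_⟩
    · push_cast; linarith
    · have := (pathsBspin.mem_mid_iff hq).1 hmem
      push_cast at this
      linarith
  rw [h] at hcorner
  have := (pathsBspin.mem_mid_iff hq').1 (mid_mem_lowerCorners_iff.1 hcorner).2.1
  push_cast at this
  linarith

theorem pathsB.eq_of_lowerCorners_spin (hε : 0 < ε) (hik : (n, k) ∈ XB n)
    (hp : p ∈ pathsB n ε n k) (hp' : p' ∈ pathsB n ε n k)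
    (h : Cp (.B n ε) p false = Cp (.B n ε) p' false) : p = p' := by
  have hlen := pathsB.length_eq hp
  have hlen' := pathsB.length_eq hp'
  simp only [if_true] at hlen hlen'
  refine eq_of_pt_eq (by rw [hlen, hlen']) (fun r hr => ?_) (fun r hr => ?_)
  · rw [pathsB.fst_eq hp hr, pathsB.fst_eq hp' (by omega)]
  · refine eqOn_of_not_first_lt (f := fun t => (pt p t).2) (g := fun t => (pt p' t).2)
      (fun r hr hb hlt => pathsB.false_of_first_lt_spin hε hik hp hp' h hr hb hlt)
      (fun r hr hb hlt => pathsB.false_of_first_lt_spin hε hik hp' hp h.symm hr hb hlt) r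
      (by omega)

theorem Halves.isSpinProfile (hik : (i, k) ∈ XB n) (hi : i ≠ n) (hab : Halves n ε i k a b) :
    IsSpinProfile n ε (fun t => (pt a t).2) ∧ IsSpinProfile n ε (fun t => (pt b t).2) := by
  simp only [XB, Set.mem_ofPred_eq] at hik
  exact ⟨pathsBspin.isSpinProfile hab.1 (by omega), pathsBspin.isSpinProfile hab.2.1 (by omega)⟩

theorem Halves.mid_transfer (hab : Halves n ε i k a b) (hab' : Halves n ε i k a' b')
    (h : Cp (.B n ε) (a ++ b.reverse) false = Cp (.B n ε) (a' ++ b'.reverse) false) :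
    MidCornersTransfer ε (pt a n).2 (pt b n).2 (pt a' n).2 (pt b' n).2 := by
  intro ℓ hℓ hin hout₁ hout₂
  have hmem := mem_mid_append_iff hab.1 hab.2.1 (y := ℓ - ε)
  have hcorner : (n, ℓ) ∈ Cp (.B n ε) (a ++ b.reverse) false :=
    mid_mem_lowerCorners_iff.2 ⟨hℓ, (mem_mid_append_iff hab.1 hab.2.1).2 hin,
      fun h => (hmem.1 h).elim hout₁ hout₂⟩
  rw [h] at hcorner
  exact (mem_mid_append_iff hab'.1 hab'.2.1).1 (mid_mem_lowerCorners_iff.1 hcorner).2.1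

theorem Halves.peaks_transfer (hik : (i, k) ∈ XB n) (hi : i ≠ n) (hab : Halves n ε i k a b)
    (hab' : Halves n ε i k a' b')
    (h : Cp (.B n ε) (a ++ b.reverse) false = Cp (.B n ε) (a' ++ b'.reverse) false) :
    (∀ t, 1 ≤ t → t < n → (pt a (t - 1)).2 < (pt a t).2 → (pt a (t + 1)).2 < (pt a t).2 →
      (pt a' t).2 = (pt a t).2) ∧
    (∀ t, 1 ≤ t → t < n → (pt b (t - 1)).2 < (pt b t).2 → (pt b (t + 1)).2 < (pt b t).2 →
      (pt b' t).2 = (pt b t).2) := by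
  have hp := hab.append_mem hi
  have hp' := hab'.append_mem hi
  have hlen := pathsB.length_eq hp
  rw [if_neg hi] at hlen
  have hleft : ∀ {c d : List (ℝ × ℝ)}, c.length = n + 1 → ∀ t ≤ n,
      pt (c ++ d.reverse) t = pt c t := fun hc t ht => pt_append_of_lt (by omega)
  have ha := hab.1.1
  have hb := hab.2.1.1
  have ha' := hab'.1.1
  have hb' := hab'.2.1.1
  constructor
  · intro t ht htn hl hr
    have := pathsB.snd_eq_of_peak hik hp hp' h ht (by omega)
      (by unfold pathX spinX; split_ifs <;> omega)
      (by rwa [hleft ha _ (by omega), hleft ha _ (by omega)])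
      (by rwa [hleft ha _ (by omega), hleft ha _ (by omega)])
    rwa [hleft ha _ (by omega), hleft ha' _ (by omega)] at this
  · intro t ht htn hl hr
    have hmirror : ∀ {c d : List (ℝ × ℝ)}, c.length = n + 1 → d.length = n + 1 →
        ∀ s, s ≤ n → ∀ u, u = 2 * n + 1 - s → pt (c ++ d.reverse) u = pt d s := by
      rintro c d hc hd s hs u rfl
      exact pt_append_reverse hc hd hs
    have := pathsB.snd_eq_of_peak hik hp hp' h (r := 2 * n + 1 - t) (by omega) (by omega)
      (by unfold pathX spinX; split_ifs <;> omega)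
      (by rwa [hmirror ha hb t (by omega) _ rfl, hmirror ha hb (t + 1) (by omega) _ (by omega)])
      (by rwa [hmirror ha hb t (by omega) _ rfl, hmirror ha hb (t - 1) (by omega) _ (by omega)])
    rwa [hmirror ha hb t (by omega) _ rfl, hmirror ha' hb' t (by omega) _ rfl] at this

theorem Halves.false_of_first_lt_left (hε : 0 < ε) (hε1 : ε < 1) (hik : (i, k) ∈ XB n)
    (hi : i ≠ n) (hab : Halves n ε i k a b) (hab' : Halves n ε i k a' b')
    (h : Cp (.B n ε) (a ++ b.reverse) false = Cp (.B n ε) (a' ++ b'.reverse) false) {r : ℕ}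
    (hr : r < n + 1) (hbefore : ∀ t < r, (pt a t).2 = (pt a' t).2)
    (hlt : (pt a' r).2 < (pt a r).2) : False := by
  obtain ⟨hFa, hFb⟩ := hab.isSpinProfile hik hi
  obtain ⟨hGa, hGb⟩ := hab'.isSpinProfile hik hi
  obtain ⟨hpa, hpb⟩ := hab.peaks_transfer hik hi hab' h
  obtain ⟨hup, hlow⟩ := hFa.lastStep_up_of_first_lt hε hGa
    (hab.1.2.2.2.1.trans hab'.1.2.2.2.1.symm) hpa (by omega) hbefore hlt
  exact false_of_left_lastStep_up (Ga := fun t => (pt a' t).2) hε hε1 hFa hFb hGb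
    (hab.2.1.2.2.2.1.trans hab'.2.1.2.2.2.1.symm) hpb hab'.2.2 (hab.mid_transfer hab' h) hup hlow

theorem Halves.false_of_first_lt_right (hε : 0 < ε) (hik : (i, k) ∈ XB n)
    (hi : i ≠ n) (hab : Halves n ε i k a b) (hab' : Halves n ε i k a' b')
    (h : Cp (.B n ε) (a ++ b.reverse) false = Cp (.B n ε) (a' ++ b'.reverse) false)
    (hsame : (pt a' n).2 = (pt a n).2) {r : ℕ}
    (hr : r < n + 1) (hbefore : ∀ t < r, (pt b t).2 = (pt b' t).2)
    (hlt : (pt b' r).2 < (pt b r).2) : False := by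
  obtain ⟨-, hFb⟩ := hab.isSpinProfile hik hi
  obtain ⟨-, hGb⟩ := hab'.isSpinProfile hik hi
  obtain ⟨-, hpb⟩ := hab.peaks_transfer hik hi hab' h
  obtain ⟨hup, hlow⟩ := hFb.lastStep_up_of_first_lt hε hGb
    (hab.2.1.2.2.2.1.trans hab'.2.1.2.2.2.1.symm) hpb (by omega) hbefore hlt
  exact false_of_right_lastStep_up (Fa := fun t => (pt a t).2) (Ga := fun t => (pt a' t).2)
    (Gb := fun t => (pt b' t).2) hε hFb hab.2.2 (hab.mid_transfer hab' h) hsame hup (by linarith)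

theorem pathsB.eq_of_lowerCorners_of_ne (hε : 0 < ε) (hε1 : ε < 1) (hik : (i, k) ∈ XB n)
    (hi : i ≠ n) (hp : p ∈ pathsB n ε i k) (hp' : p' ∈ pathsB n ε i k)
    (h : Cp (.B n ε) p false = Cp (.B n ε) p' false) : p = p' := by
  obtain ⟨a, b, hab, rfl⟩ := exists_halves hi hp
  obtain ⟨a', b', hab', rfl⟩ := exists_halves hi hp'
  have haa : ∀ t < n + 1, (pt a t).2 = (pt a' t).2 :=
    eqOn_of_not_first_lt (f := fun t => (pt a t).2) (g := fun t => (pt a' t).2)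
      (fun r hr hb hlt => hab.false_of_first_lt_left hε hε1 hik hi hab' h hr hb hlt)
      (fun r hr hb hlt => hab'.false_of_first_lt_left hε hε1 hik hi hab h.symm hr hb hlt)
  have hbb : ∀ t < n + 1, (pt b t).2 = (pt b' t).2 :=
    eqOn_of_not_first_lt (f := fun t => (pt b t).2) (g := fun t => (pt b' t).2)
      (fun r hr hb hlt => hab.false_of_first_lt_right hε hik hi hab' h
        (haa n (by omega)).symm hr hb hlt)
      (fun r hr hb hlt => hab'.false_of_first_lt_right hε hik hi hab h.symm
        (haa n (by omega)) hr hb hlt)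
  have hhalf : ∀ {l : ℤ} {c c' : List (ℝ × ℝ)}, c ∈ pathsBspin n ε l → c' ∈ pathsBspin n ε l →
      (∀ t < n + 1, (pt c t).2 = (pt c' t).2) → c = c' := fun hc hc' hy =>
    eq_of_pt_eq (by rw [hc.1, hc'.1])
      (fun t ht => by
        rw [pathsBspin.fst_eq hc (by rw [hc.1] at ht; omega),
          pathsBspin.fst_eq hc' (by rw [hc.1] at ht; omega)])
      (fun t ht => hy t (by rw [← hc.1]; exact ht))
  rw [hhalf hab.1 hab'.1 haa, hhalf hab.2.1 hab'.2.1 hbb]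

end PathsB

/-- any path in `𝒫_{i,k}` is uniquely determined by its set of lower corners. -/
theorem stmt2 (S : Setting) (hS : S.valid) (i : ℕ) (k : ℤ) (hik : (i, k) ∈ X S)
    (p p' : List (ℝ × ℝ)) (hp : p ∈ P S i k) (hp' : p' ∈ P S i k)
    (h : Cp S p false = Cp S p' false) : p = p' := by
  match S with
  | .A n => exact pathsA.eq_of_lowerCorners hp hp' h
  | .B n ε =>
    obtain ⟨-, hε, hε2⟩ := hS
    by_cases hi : i = n
    · subst hi
      exact pathsB.eq_of_lowerCorners_spin hε hik hp hp' h
    · exact pathsB.eq_of_lowerCorners_of_ne hε (by linarith) hik hi hp hp' h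

end Paper
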